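/- The posterior predictive distribution of the next symbol satisfies P(x_{n+1}|x_{−D+1}^n) = Σ_{i=0}^{D} [(a_{s^{(i)}}(x_{n+1}) + 1/2)/(M_{s^{(i)}} + m/2)]·γ_i, where s^{(i)} is the context of length i preceding x_{n+1}, and γ_i is the posterior probability that s^{(i)} is a leaf: γ_0 = P_{b,λ}, γ_i = [Π_{k=0}^{i−1}(1−P_{b,s^{(k)}})]·P_{b,s^{(i)}} for 1 ≤ i ≤ D−1, and γ_D = Π_{k=0}^{D−1}(1−P_{b,s^{(k)}}). -/

import Mathlib

open MeasureTheory Filter Real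
open scoped Topology ENNReal Classical

noncomputable section

inductive MTree (m : ℕ) : Type
  | leaf : MTree m
  | node : (Fin m → MTree m) → MTree m

namespace MTree

variable {m : ℕ}

def depth : MTree m → ℕ
  | leaf => 0
  | node f => (Finset.univ.sup fun j => depth (f j)) + 1

def numLeaves : MTree m → ℕ
  | leaf => 1
  | node f => ∑ j, numLeaves (f j)

def leavesAtDepth : MTree m → ℕ → ℕ
  | leaf, 0 => 1
  | leaf, _ + 1 => 0
  | node _, 0 => 0
  | node f, d + 1 => ∑ j, leavesAtDepth (f j) d

def nodesAtDepth : MTree m → ℕ → ℕ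
  | _, 0 => 1
  | leaf, _ + 1 => 0
  | node f, d + 1 => ∑ j, nodesAtDepth (f j) d

end MTree

/-- The BCT prior `π_D(T;β) = α^{|T|-1} β^{|T|-L_D(T)}` with `α = (1-β)^{1/(m-1)}`. -/
def priorBCT (m D : ℕ) (β : ℝ) (T : MTree m) : ℝ :=
  ((1 - β) ^ (((m : ℝ) - 1)⁻¹)) ^ (T.numLeaves - 1) * β ^ (T.numLeaves - T.leavesAtDepth D)

/-- Probability that the Galton–Watson process with offspring distribution (β,1-β) on {0,m},
stopped at generation D, produces the tree `T`. -/
def gwStopped {m : ℕ} (β : ℝ) : ℕ → MTree m → ℝ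
  | 0, .leaf => 1
  | 0, .node _ => 0
  | _ + 1, .leaf => β
  | D + 1, .node f => (1 - β) * ∏ j, gwStopped β D (f j)


/-- The weighted probabilities `P_{w,s}`: with remaining depth budget 0 (i.e. at maximal
depth D), `P_{w,s} = P_{e,s}`; otherwise `P_{w,s} = β P_{e,s} + (1-β) ∏_j P_{w,sj}`. -/
def pw {m : ℕ} (β : ℝ) (Pe : List (Fin m) → ℝ) : ℕ → List (Fin m) → ℝ
  | 0, s => Pe s
  | D + 1, s => β * Pe s + (1 - β) * ∏ j, pw β Pe D (s ++ [j])

/-- The branching probabilities `P_{b,s} = β P_{e,s} / P_{w,s}` for contexts of length < D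
(positive remaining budget), with the convention `P_{b,s} = 1` at maximal depth. -/
def pb {m : ℕ} (β : ℝ) (Pe : List (Fin m) → ℝ) : ℕ → List (Fin m) → ℝ
  | 0, _ => 1
  | D + 1, s => β * Pe s / pw β Pe (D + 1) s

/-- `∏_{s ∈ T} P_{e,s}`: product of the estimated probabilities over the leaf contexts of
the tree `T` rooted at context `s`; this is the marginal likelihood `P(x|T)`. -/
def leafProd {m : ℕ} (Pe : List (Fin m) → ℝ) : List (Fin m) → MTree m → ℝ
  | s, .leaf => Pe s
  | s, .node f => ∏ j, leafProd Pe (s ++ [j]) (f j)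

/-- The Krichevsky–Trofimov estimated probability of a count vector. -/
def ktProb (m : ℕ) (a : Fin m → ℕ) : ℝ :=
  (∏ j, ∏ i ∈ Finset.range (a j), ((i : ℝ) + 1 / 2)) /
    ∏ i ∈ Finset.range (∑ j, a j), ((m : ℝ) / 2 + i)

/-- Count vector: the number of times symbol j follows context s (s listed with the most
recent symbol first) in the observations x_1,...,x_n of the sequence x. -/
def cntSeq {m : ℕ} (x : ℤ → Fin m) (n : ℕ) (s : List (Fin m)) (j : Fin m) : ℕ :=
  ((Finset.Icc (1 : ℤ) n).filter fun i =>
    x i = j ∧ ∀ k : Fin s.length, x (i - 1 - (k : ℤ)) = s.get k).card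

/-- The leaf context of the tree T determined by the past symbols w
(most recent symbol first). -/
def ctxW {m : ℕ} : MTree m → List (Fin m) → List (Fin m)
  | .leaf, _ => []
  | .node _, [] => []
  | .node f, a :: rest => a :: ctxW (f a) rest

/-!
On trees of depth at most `D` the BCT prior is the law of a stopped Galton–Watson tree: every
node above depth `D` is a leaf with probability `β` and has `m` children otherwise, because
`α ^ (m - 1) = 1 - β`. Sums of products over such trees therefore factor through the root, which
gives `∑_T π(T) ∏_{s ∈ T} P_{e,s} = P_{w,λ}`. If the summand also depends on the leaf of `T`
met along the past `x_n, x_{n-1}, …`, only the subtree in direction `x_n` sees that dependence,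
so the posterior splits as `P_{b,λ}` (the root is that leaf) plus `1 - P_{b,λ}` times the same
quantity one level down; unrolling this recursion produces the weights `γ_i`.
-/

theorem Fintype.sum_prod_mul_apply {ι κ R : Type*} [Fintype ι] [DecidableEq ι] [Fintype κ]
    [CommSemiring R] (a : ι → κ → R) (h : κ → R) (i₀ : ι) :
    ∑ f : ι → κ, (∏ i, a i (f i)) * h (f i₀) =
      (∑ k, a i₀ k * h k) * ∏ i ∈ {i₀}ᶜ, ∑ k, a i k := by
  have hsplit : ∀ f : ι → κ,
      (∏ i, a i (f i)) * h (f i₀) = ∏ i, a i (f i) * if i = i₀ then h (f i) else 1 := by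
    intro f
    rw [Finset.prod_mul_distrib, Finset.prod_ite_eq', if_pos (Finset.mem_univ _)]
  simp_rw [hsplit]
  rw [← Fintype.prod_sum fun i k => a i k * if i = i₀ then h k else 1]
  rw [Fintype.prod_eq_mul_prod_compl i₀]
  congr 1
  · simp
  · exact Finset.prod_congr rfl fun i hi => by simp_all

theorem append_ofFn_succ {α : Type*} (s : List α) (w : ℕ → α) (k : ℕ) :
    s ++ List.ofFn (fun l : Fin (k + 1) => w l) =
      (s ++ [w 0]) ++ List.ofFn fun l : Fin k => w (l + 1) := by
  simp [List.ofFn_succ]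

namespace MTree

variable {m : ℕ}

theorem depth_node_le_succ_iff {f : Fin m → MTree m} {D : ℕ} :
    (node f).depth ≤ D + 1 ↔ ∀ j, (f j).depth ≤ D := by
  simp [depth, Finset.sup_le_iff]

theorem eq_leaf_of_depth_le_zero : ∀ {T : MTree m}, T.depth ≤ 0 → T = leaf
  | leaf, _ => rfl
  | node _, h => by simp [depth] at h

instance : Unique {T : MTree m // T.depth ≤ 0} where
  default := ⟨leaf, le_refl _⟩
  uniq := fun ⟨_, hT⟩ => Subtype.ext (eq_leaf_of_depth_le_zero hT)

def depthLeSuccEquiv (D : ℕ) :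
    {T : MTree m // T.depth ≤ D + 1} ≃ Option (Fin m → {T : MTree m // T.depth ≤ D}) where
  toFun
    | ⟨leaf, _⟩ => none
    | ⟨node f, h⟩ => some fun j => ⟨f j, depth_node_le_succ_iff.1 h j⟩
  invFun
    | none => ⟨leaf, Nat.zero_le _⟩
    | some f => ⟨node fun j => (f j).1, depth_node_le_succ_iff.2 fun j => (f j).2⟩
  left_inv := by rintro ⟨_ | _, _⟩ <;> rfl
  right_inv := by rintro (_ | _) <;> rfl

instance fintypeDepthLe : (D : ℕ) → Fintype {T : MTree m // T.depth ≤ D}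
  | 0 => inferInstance
  | D + 1 => letI := fintypeDepthLe D; Fintype.ofEquiv _ (depthLeSuccEquiv D).symm

theorem one_le_numLeaves (hm : 1 ≤ m) : ∀ T : MTree m, 1 ≤ T.numLeaves
  | leaf => le_rfl
  | node f => (one_le_numLeaves hm (f ⟨0, hm⟩)).trans
      (Finset.single_le_sum (f := fun j => (f j).numLeaves) (fun _ _ => Nat.zero_le _)
        (Finset.mem_univ _))

theorem leavesAtDepth_le_numLeaves : ∀ (T : MTree m) (D : ℕ), T.leavesAtDepth D ≤ T.numLeaves
  | leaf, 0 => le_rfl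
  | leaf, _ + 1 => Nat.zero_le _
  | node _, 0 => Nat.zero_le _
  | node f, D + 1 => Finset.sum_le_sum fun j _ => leavesAtDepth_le_numLeaves (f j) D

theorem numLeaves_node_sub_one (hm : 1 ≤ m) (f : Fin m → MTree m) :
    (node f).numLeaves - 1 = (m - 1) + ∑ j, ((f j).numLeaves - 1) := by
  have h : (node f).numLeaves = ∑ j, ((f j).numLeaves - 1) + m := calc
    (node f).numLeaves = ∑ j, (((f j).numLeaves - 1) + 1) :=
      Finset.sum_congr rfl fun j _ => (Nat.sub_add_cancel (one_le_numLeaves hm (f j))).symm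
    _ = ∑ j, ((f j).numLeaves - 1) + m := by simp [Finset.sum_add_distrib]
  omega

theorem numLeaves_sub_leavesAtDepth_node (f : Fin m → MTree m) (D : ℕ) :
    (node f).numLeaves - (node f).leavesAtDepth (D + 1) =
      ∑ j, ((f j).numLeaves - (f j).leavesAtDepth D) :=
  (Finset.sum_tsub_distrib _ fun j _ => leavesAtDepth_le_numLeaves (f j) D).symm

variable {M : Type*} [AddCommMonoid M]

theorem sum_depth_le_zero (F : MTree m → M) :
    ∑ T : {T : MTree m // T.depth ≤ 0}, F T.1 = F leaf :=
  Fintype.sum_unique _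

theorem sum_depth_le_succ (D : ℕ) (F : MTree m → M) :
    ∑ T : {T : MTree m // T.depth ≤ D + 1}, F T.1 =
      F leaf + ∑ f : Fin m → {T : MTree m // T.depth ≤ D}, F (node fun j => (f j).1) := by
  rw [← (depthLeSuccEquiv D).symm.sum_comp, Fintype.sum_option]
  rfl

end MTree

section Prior

variable {m : ℕ} {β : ℝ}

theorem priorBCT_node (hm : 2 ≤ m) (hβ : β ≤ 1) (D : ℕ) (f : Fin m → MTree m) :
    priorBCT m (D + 1) β (.node f) = (1 - β) * ∏ j, priorBCT m D β (f j) := by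
  have hα : ((1 - β) ^ (((m : ℝ) - 1)⁻¹)) ^ (m - 1) = 1 - β := by
    have hcast : ((m - 1 : ℕ) : ℝ) = (m : ℝ) - 1 := by push_cast [show 1 ≤ m by omega]; ring
    rw [← hcast, Real.rpow_inv_natCast_pow (by linarith) (by omega)]
  simp only [priorBCT, MTree.numLeaves_node_sub_one (by omega : 1 ≤ m),
    MTree.numLeaves_sub_leavesAtDepth_node, pow_add, hα, Finset.prod_mul_distrib,
    Finset.prod_pow_eq_pow_sum]
  ring

theorem priorBCT_eq_gwStopped (hm : 2 ≤ m) (hβ : β ≤ 1) :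
    ∀ (D : ℕ) (T : MTree m), T.depth ≤ D → priorBCT m D β T = gwStopped β D T
  | 0, .leaf, _ => by simp [priorBCT, gwStopped, MTree.numLeaves, MTree.leavesAtDepth]
  | _ + 1, .leaf, _ => by simp [priorBCT, gwStopped, MTree.numLeaves, MTree.leavesAtDepth]
  | 0, .node _, h => by simp [MTree.depth] at h
  | D + 1, .node f, h => by
    rw [priorBCT_node hm hβ, gwStopped]
    congr 1
    exact Finset.prod_congr rfl fun j _ =>
      priorBCT_eq_gwStopped hm hβ D (f j) (MTree.depth_node_le_succ_iff.1 h j)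

end Prior

section Likelihood

variable {m : ℕ} {β : ℝ} {Pe : List (Fin m) → ℝ}

theorem ktProb_pos (hm : 0 < m) (a : Fin m → ℕ) : 0 < ktProb m a := by
  have : (0 : ℝ) < m := by exact_mod_cast hm
  unfold ktProb
  positivity

theorem pw_pos (hβ₀ : 0 < β) (hβ₁ : β ≤ 1) (hPe : ∀ s, 0 < Pe s) :
    ∀ (D : ℕ) (s : List (Fin m)), 0 < pw β Pe D s
  | 0, s => hPe s
  | D + 1, s => add_pos_of_pos_of_nonneg (mul_pos hβ₀ (hPe s))
      (mul_nonneg (sub_nonneg.2 hβ₁)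
        (Finset.prod_nonneg fun j _ => (pw_pos hβ₀ hβ₁ hPe D (s ++ [j])).le))

theorem sum_gwStopped_mul_leafProd :
    ∀ (D : ℕ) (s : List (Fin m)),
      ∑ T : {T : MTree m // T.depth ≤ D}, gwStopped β D T.1 * leafProd Pe s T.1 = pw β Pe D s
  | 0, s => by
    rw [MTree.sum_depth_le_zero fun T => gwStopped β 0 T * leafProd Pe s T]
    simp [gwStopped, leafProd, pw]
  | D + 1, s => by
    rw [MTree.sum_depth_le_succ D fun T => gwStopped β (D + 1) T * leafProd Pe s T]
    simp only [gwStopped, leafProd, pw]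
    congr 1
    simp_rw [mul_assoc, ← Finset.prod_mul_distrib, ← Finset.mul_sum]
    rw [← Fintype.prod_sum fun j (T : {T : MTree m // T.depth ≤ D}) =>
      gwStopped β D T.1 * leafProd Pe (s ++ [j]) T.1]
    simp only [sum_gwStopped_mul_leafProd D]

end Likelihood

/-- The paper's `γ_i`: the posterior probability that the context `s ++ [w 0, …, w (i-1)]` is a
leaf, for trees of depth at most `D` rooted at `s`. -/
def posteriorLeafProb {m : ℕ} (β : ℝ) (Pe : List (Fin m) → ℝ) (D : ℕ) (s : List (Fin m))
    (w : ℕ → Fin m) (i : ℕ) : ℝ :=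
  (∏ k ∈ Finset.range i, (1 - pb β Pe (D - k) (s ++ List.ofFn fun l : Fin k => w l))) *
    pb β Pe (D - i) (s ++ List.ofFn fun l : Fin i => w l)

section Posterior

variable {m : ℕ} {β : ℝ} {Pe : List (Fin m) → ℝ}

theorem posteriorLeafProb_zero (D : ℕ) (s : List (Fin m)) (w : ℕ → Fin m) :
    posteriorLeafProb β Pe D s w 0 = pb β Pe D s := by
  simp [posteriorLeafProb]

theorem posteriorLeafProb_succ_succ (D : ℕ) (s : List (Fin m)) (w : ℕ → Fin m) (i : ℕ) :
    posteriorLeafProb β Pe (D + 1) s w (i + 1) =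
      (1 - pb β Pe (D + 1) s) * posteriorLeafProb β Pe D (s ++ [w 0]) (fun k => w (k + 1)) i := by
  simp only [posteriorLeafProb, Finset.prod_range_succ', append_ofFn_succ, Nat.add_sub_add_right,
    List.ofFn_zero, List.append_nil, Nat.sub_zero]
  ring

theorem sum_mul_posteriorLeafProb_succ (g : List (Fin m) → ℝ) (D : ℕ) (s : List (Fin m))
    (w : ℕ → Fin m) :
    ∑ i ∈ Finset.range (D + 2),
        g (s ++ List.ofFn fun k : Fin i => w k) * posteriorLeafProb β Pe (D + 1) s w i =
      pb β Pe (D + 1) s * g s + (1 - pb β Pe (D + 1) s) *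
        ∑ i ∈ Finset.range (D + 1), g ((s ++ [w 0]) ++ List.ofFn fun k : Fin i => w (k + 1)) *
          posteriorLeafProb β Pe D (s ++ [w 0]) (fun k => w (k + 1)) i := by
  rw [Finset.sum_range_succ', Finset.mul_sum, add_comm]
  simp only [posteriorLeafProb_succ_succ, posteriorLeafProb_zero, append_ofFn_succ,
    List.ofFn_zero, List.append_nil]
  congr 1
  · ring
  · exact Finset.sum_congr rfl fun i _ => by ring

theorem gwStopped_mul_leafProd_mul_ctxW_node (g : List (Fin m) → ℝ) (D : ℕ) (s : List (Fin m))
    (w : ℕ → Fin m) (f : Fin m → MTree m) :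
    gwStopped β (D + 1) (.node f) * leafProd Pe s (.node f) *
        g (s ++ ctxW (.node f) (List.ofFn fun k : Fin (D + 1) => w k)) =
      (1 - β) * ((∏ j, gwStopped β D (f j) * leafProd Pe (s ++ [j]) (f j)) *
        g ((s ++ [w 0]) ++ ctxW (f (w 0)) (List.ofFn fun k : Fin D => w (k + 1)))) := by
  rw [List.ofFn_succ]
  simp only [gwStopped, leafProd, ctxW, Finset.prod_mul_distrib, Fin.val_zero, Fin.val_succ]
  rw [List.append_cons]
  ring

theorem sum_gwStopped_mul_leafProd_mul_ctxW (hβ₀ : 0 < β) (hβ₁ : β ≤ 1) (hPe : ∀ s, 0 < Pe s)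
    (g : List (Fin m) → ℝ) :
    ∀ (D : ℕ) (s : List (Fin m)) (w : ℕ → Fin m),
      ∑ T : {T : MTree m // T.depth ≤ D}, gwStopped β D T.1 * leafProd Pe s T.1 *
          g (s ++ ctxW T.1 (List.ofFn fun k : Fin D => w k)) =
        pw β Pe D s * ∑ i ∈ Finset.range (D + 1),
          g (s ++ List.ofFn fun k : Fin i => w k) * posteriorLeafProb β Pe D s w i
  | 0, s, w => by
    rw [MTree.sum_depth_le_zero fun T => gwStopped β 0 T * leafProd Pe s T *
      g (s ++ ctxW T (List.ofFn fun k : Fin 0 => w k))]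
    simp [gwStopped, leafProd, ctxW, pw, posteriorLeafProb, pb]
  | D + 1, s, w => by
    rw [MTree.sum_depth_le_succ D fun T => gwStopped β (D + 1) T * leafProd Pe s T *
        g (s ++ ctxW T (List.ofFn fun k : Fin (D + 1) => w k)),
      Finset.sum_congr rfl fun f _ => gwStopped_mul_leafProd_mul_ctxW_node g D s w _,
      ← Finset.mul_sum,
      Fintype.sum_prod_mul_apply (fun j (T : {T : MTree m // T.depth ≤ D}) =>
          gwStopped β D T.1 * leafProd Pe (s ++ [j]) T.1)
        (fun T => g ((s ++ [w 0]) ++ ctxW T.1 (List.ofFn fun k : Fin D => w (k + 1)))) (w 0),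
      sum_gwStopped_mul_leafProd_mul_ctxW hβ₀ hβ₁ hPe g D (s ++ [w 0]) (fun k => w (k + 1)),
      sum_mul_posteriorLeafProb_succ]
    simp only [sum_gwStopped_mul_leafProd, gwStopped, leafProd, ctxW, List.append_nil]
    have hpw : pw β Pe (D + 1) s = β * Pe s + (1 - β) *
        (pw β Pe D (s ++ [w 0]) * ∏ j ∈ {w 0}ᶜ, pw β Pe D (s ++ [j])) := by
      rw [pw, Fintype.prod_eq_mul_prod_compl (w 0)]
    have hpw_ne := (pw_pos hβ₀ hβ₁ hPe (D + 1) s).ne'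
    rw [pb]
    field_simp
    rw [hpw]
    ring

end Posterior

/-- the posterior predictive distribution
P(x_{n+1}|x) = sum_T pi(T|x) P(x_{n+1}|T,x) equals
sum_{i=0}^D [(a_{s^(i)}(x_{n+1}) + 1/2)/(M_{s^(i)} + m/2)] * gamma_i,
where s^(i) is the context of length i preceding x_{n+1} and gamma_i is the posterior
probability that s^(i) is a leaf, expressed via the branching probabilities P_{b,s}
(with the convention that the branching probability is 1 at depth D, i.e. budget 0). -/
theorem posterior_predictive {m : ℕ} (hm : 2 ≤ m) (D : ℕ) (β : ℝ)
    (hβ : β ∈ Set.Ioo (0 : ℝ) 1) (x : ℤ → Fin m) (n : ℕ) :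
    (∑' T : {T : MTree m // T.depth ≤ D},
      (priorBCT m D β T.1 * leafProd (fun s => ktProb m (cntSeq x n s)) [] T.1 /
          pw β (fun s => ktProb m (cntSeq x n s)) D []) *
        ((cntSeq x n (ctxW T.1 (List.ofFn fun k : Fin D => x ((n : ℤ) - k))) (x ((n : ℤ) + 1)) +
            1 / 2 : ℝ) /
          ((∑ j, cntSeq x n (ctxW T.1 (List.ofFn fun k : Fin D => x ((n : ℤ) - k))) j : ℕ) +
            (m : ℝ) / 2))) =
    ∑ i ∈ Finset.range (D + 1),
      ((cntSeq x n (List.ofFn fun k : Fin i => x ((n : ℤ) - k)) (x ((n : ℤ) + 1)) +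
          1 / 2 : ℝ) /
        ((∑ j, cntSeq x n (List.ofFn fun k : Fin i => x ((n : ℤ) - k)) j : ℕ) + (m : ℝ) / 2)) *
      ((∏ k ∈ Finset.range i,
          (1 - pb β (fun s => ktProb m (cntSeq x n s)) (D - k)
            (List.ofFn fun l : Fin k => x ((n : ℤ) - l)))) *
        pb β (fun s => ktProb m (cntSeq x n s)) (D - i)
          (List.ofFn fun l : Fin i => x ((n : ℤ) - l))) := by
  set Pe : List (Fin m) → ℝ := fun s => ktProb m (cntSeq x n s)
  set g : List (Fin m) → ℝ := fun s =>
    ((cntSeq x n s (x ((n : ℤ) + 1)) : ℝ) + 1 / 2) / ((∑ j, cntSeq x n s j : ℕ) + (m : ℝ) / 2)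
  have hPe : ∀ s, 0 < Pe s := fun s => ktProb_pos (by omega) _
  have hpw : pw β Pe D [] ≠ 0 := (pw_pos hβ.1 hβ.2.le hPe D []).ne'
  have key := sum_gwStopped_mul_leafProd_mul_ctxW hβ.1 hβ.2.le hPe g D [] fun k => x (n - k)
  simp only [List.nil_append] at key
  rw [tsum_fintype]
  calc _ = (∑ T : {T : MTree m // T.depth ≤ D}, gwStopped β D T.1 * leafProd Pe [] T.1 *
          g (ctxW T.1 (List.ofFn fun k : Fin D => x (n - k)))) / pw β Pe D [] := by
        rw [Finset.sum_div]
        refine Finset.sum_congr rfl fun T _ => ?_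
        rw [priorBCT_eq_gwStopped hm hβ.2.le D T.1 T.2]
        ring
    _ = _ := by
        rw [key, mul_div_cancel_left₀ _ hpw]
        rfl

end
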